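/- arXiv:1302.2220 — 2 statements merged into one kernel-verified Lean document; each statement's English description precedes it below -/
import Mathlib

section
/- Let M ⊆ ℂ^N, let S ⊆ ℂ^N be open, let σ : S → M be a retraction (σ continuous with σ(ζ) = ζ for ζ ∈ M ∩ S, σ(S) ⊆ M), and let p : X → M be a local homeomorphism. Define X̃₀ = {(x, v) ∈ X × ℂ^N : p(x) + v ∈ S and σ(p(x) + v) = p(x)} and p₀(x, v) = p(x) + v. Then p₀ : X̃₀ → ℂ^N is a local homeomorphism onto open subsets of S; more precisely, for every (x₀, v₀) ∈ X̃₀ there is an open neighborhood U of x₀ with p|_U a homeomorphism onto p(U), and then p₀ restricted to V = X̃₀ ∩ (U × ℂ^N) is a homeomorphism onto V' = σ^{-1}(p(U)), with inverse z ↦ ((p|_U)^{-1}(σ(z)), z − σ(z)). -/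
/-!
A point `(y, w)` of `X̃₀ = retractionDomain p σ S` with `y ∈ U` is recovered from
`z = p y + w`: the defining equation `σ z = p y` gives back `y = (p|_U)⁻¹ (σ z)`, and then `w = z - σ z`. Conversely every `z ∈ S` with
`σ z ∈ p(U)` arises this way. The target `σ⁻¹(p(U))` is open because `p(U)` is open in `M` and
`σ` maps the open set `S` continuously into `M`.
-/

open Set

theorem ContinuousOn.isOpen_inter_preimage_inter {α β : Type*} [TopologicalSpace α]
    [TopologicalSpace β] {f : α → β} {s : Set α} {W M : Set β} (hf : ContinuousOn f s)
    (hs : IsOpen s) (hW : IsOpen W) (hfM : MapsTo f s M) : IsOpen (s ∩ f ⁻¹' (W ∩ M)) := by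
  have : s ∩ f ⁻¹' (W ∩ M) = s ∩ f ⁻¹' W := by
    ext z
    exact ⟨fun ⟨hz, hzW, _⟩ => ⟨hz, hzW⟩, fun ⟨hz, hzW⟩ => ⟨hz, hzW, hfM hz⟩⟩
  exact this ▸ hf.isOpen_inter_preimage hs hW

section RetractionDomain

variable {X E : Type*} [AddCommGroup E]

def retractionDomain (p : X → E) (σ : E → E) (S : Set E) : Set (X × E) :=
  {yw | p yw.1 + yw.2 ∈ S ∧ σ (p yw.1 + yw.2) = p yw.1}

def retractionInv (π : E → X) (σ : E → E) (z : E) : X × E :=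
  (π (σ z), z - σ z)

variable {p : X → E} {σ : E → E} {S : Set E} {U : Set X} {π : E → X}

theorem mapsTo_add_retractionDomain :
    MapsTo (fun yw : X × E => p yw.1 + yw.2) (retractionDomain p σ S ∩ U ×ˢ univ)
      {z ∈ S | σ z ∈ p '' U} := by
  rintro ⟨y, w⟩ ⟨⟨hS, hσ⟩, hyU, -⟩
  exact ⟨hS, hσ ▸ mem_image_of_mem p hyU⟩

theorem Set.LeftInvOn.retractionInv_add (hπ : LeftInvOn π p U) {y : X} {w : E}
    (hyw : (y, w) ∈ retractionDomain p σ S ∩ U ×ˢ univ) :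
    retractionInv π σ (p y + w) = (y, w) := by
  obtain ⟨⟨-, hσ⟩, hyU, -⟩ := hyw
  simp only [retractionInv, hσ, hπ hyU, add_sub_cancel_left]

theorem Set.LeftInvOn.add_retractionInv (hπ : LeftInvOn π p U) {z : E} (hz : σ z ∈ p '' U) :
    p (π (σ z)) + (z - σ z) = z := by
  obtain ⟨y, hyU, hyz⟩ := hz
  rw [← hyz, hπ hyU]
  abel

theorem Set.LeftInvOn.mapsTo_retractionInv (hπ : LeftInvOn π p U) :
    MapsTo (retractionInv π σ) {z ∈ S | σ z ∈ p '' U} (retractionDomain p σ S ∩ U ×ˢ univ) := by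
  rintro z ⟨hzS, hz⟩
  have hpz := hπ.add_retractionInv hz
  obtain ⟨y, hyU, hyz⟩ := hz
  have hπz : π (σ z) = y := hyz ▸ hπ hyU
  refine ⟨⟨?_, ?_⟩, show π (σ z) ∈ U from hπz ▸ hyU, trivial⟩
  · simpa only [retractionInv, hpz] using hzS
  · show σ (p (π (σ z)) + (z - σ z)) = p (π (σ z))
    rw [hpz, hπz, hyz]

theorem Set.LeftInvOn.invOn_retractionInv (hπ : LeftInvOn π p U) :
    InvOn (retractionInv π σ) (fun yw : X × E => p yw.1 + yw.2)
      (retractionDomain p σ S ∩ U ×ˢ univ) {z ∈ S | σ z ∈ p '' U} :=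
  ⟨fun _ hyw => hπ.retractionInv_add hyw, fun _ hz => hπ.add_retractionInv hz.2⟩

theorem continuousOn_retractionInv [TopologicalSpace X] [TopologicalSpace E]
    [ContinuousSub E] (hπ : ContinuousOn π (p '' U)) (hσ : ContinuousOn σ S) :
    ContinuousOn (retractionInv π σ) {z ∈ S | σ z ∈ p '' U} := by
  have hσ' : ContinuousOn σ {z ∈ S | σ z ∈ p '' U} := hσ.mono fun _ hz => hz.1
  exact (hπ.comp hσ' fun _ hz => hz.2).prodMk (continuousOn_id.sub hσ')

end RetractionDomain

theorem riemann_domain_over_retraction_general (N : ℕ)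
    (M S : Set (Fin N → ℂ)) (hS : IsOpen S)
    (σ : (Fin N → ℂ) → (Fin N → ℂ))
    (hσc : ContinuousOn σ S) (hσM : ∀ z ∈ S, σ z ∈ M)
    {X : Type*} [TopologicalSpace X]
    (p : X → (Fin N → ℂ)) (hpc : Continuous p)
    -- p is a local homeomorphism onto open subsets of M:
    (hp : ∀ x : X, ∃ U : Set X, IsOpen U ∧ x ∈ U ∧ Set.InjOn p U ∧
      (∃ W : Set (Fin N → ℂ), IsOpen W ∧ p '' U = W ∩ M) ∧
      (∃ π : (Fin N → ℂ) → X, ContinuousOn π (p '' U) ∧ ∀ x' ∈ U, π (p x') = x')) :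
    ∀ xv : X × (Fin N → ℂ),
      xv ∈ {yw : X × (Fin N → ℂ) | p yw.1 + yw.2 ∈ S ∧ σ (p yw.1 + yw.2) = p yw.1} →
      ∃ U : Set X, IsOpen U ∧ xv.1 ∈ U ∧ Set.InjOn p U ∧
        (let X₀ : Set (X × (Fin N → ℂ)) :=
          {yw | p yw.1 + yw.2 ∈ S ∧ σ (p yw.1 + yw.2) = p yw.1}
        let p₀ : X × (Fin N → ℂ) → (Fin N → ℂ) := fun yw => p yw.1 + yw.2
        let V : Set (X × (Fin N → ℂ)) := X₀ ∩ (U ×ˢ Set.univ)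
        let V' : Set (Fin N → ℂ) := {z ∈ S | σ z ∈ p '' U}
        IsOpen V' ∧ Set.BijOn p₀ V V' ∧ ContinuousOn p₀ V ∧
          ∃ ρ : (Fin N → ℂ) → X × (Fin N → ℂ),
            ContinuousOn ρ V' ∧ Set.MapsTo ρ V' V ∧
            (∀ z ∈ V', p₀ (ρ z) = z) ∧ (∀ yw ∈ V, ρ (p₀ yw) = yw)) := by
  rintro ⟨x₀, -⟩ -
  obtain ⟨U, hUopen, hxU, hUinj, ⟨W, hWopen, hUW⟩, π, hπc, hπp⟩ := hp x₀
  have hπ : LeftInvOn π p U := hπp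
  have hinv := hπ.invOn_retractionInv (σ := σ) (S := S)
  refine ⟨U, hUopen, hxU, hUinj, ?_, hinv.bijOn mapsTo_add_retractionDomain hπ.mapsTo_retractionInv,
    by fun_prop, retractionInv π σ, continuousOn_retractionInv hπc hσc, hπ.mapsTo_retractionInv,
    hinv.2, hinv.1⟩
  show IsOpen (S ∩ σ ⁻¹' (p '' U))
  exact hUW ▸ hσc.isOpen_inter_preimage_inter hS hWopen hσM

/-- Lemma 3.1: given a holomorphic-retraction-style setup σ : S → M (here only
topological data is used) and a Riemann domain p : X → M, the space
X̃₀ = {(x,v) : p(x)+v ∈ S, σ(p(x)+v) = p(x)} with p₀(x,v) = p(x)+v is a Riemann region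
over ℂ^N: around each point, p₀ restricts to a homeomorphism of
V = X̃₀ ∩ (U × ℂ^N) onto the open set V' = σ⁻¹(p(U)) ⊆ S, with inverse
z ↦ ((p|_U)⁻¹(σ z), z − σ z). -/
theorem riemann_domain_over_retraction (N : ℕ)
    (M S : Set (Fin N → ℂ)) (hS : IsOpen S)
    (σ : (Fin N → ℂ) → (Fin N → ℂ))
    (hσc : ContinuousOn σ S) (hσM : ∀ z ∈ S, σ z ∈ M) (hσret : ∀ z ∈ M ∩ S, σ z = z)
    {X : Type*} [TopologicalSpace X] [T2Space X]
    (p : X → (Fin N → ℂ)) (hpM : ∀ x, p x ∈ M) (hpc : Continuous p)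
    -- p is a local homeomorphism onto open subsets of M:
    (hp : ∀ x : X, ∃ U : Set X, IsOpen U ∧ x ∈ U ∧ Set.InjOn p U ∧
      (∃ W : Set (Fin N → ℂ), IsOpen W ∧ p '' U = W ∩ M) ∧
      (∃ π : (Fin N → ℂ) → X, ContinuousOn π (p '' U) ∧ ∀ x' ∈ U, π (p x') = x')) :
    ∀ xv : X × (Fin N → ℂ),
      xv ∈ {yw : X × (Fin N → ℂ) | p yw.1 + yw.2 ∈ S ∧ σ (p yw.1 + yw.2) = p yw.1} →
      ∃ U : Set X, IsOpen U ∧ xv.1 ∈ U ∧ Set.InjOn p U ∧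
        (let X₀ : Set (X × (Fin N → ℂ)) :=
          {yw | p yw.1 + yw.2 ∈ S ∧ σ (p yw.1 + yw.2) = p yw.1}
        let p₀ : X × (Fin N → ℂ) → (Fin N → ℂ) := fun yw => p yw.1 + yw.2
        let V : Set (X × (Fin N → ℂ)) := X₀ ∩ (U ×ˢ Set.univ)
        let V' : Set (Fin N → ℂ) := {z ∈ S | σ z ∈ p '' U}
        IsOpen V' ∧ Set.BijOn p₀ V V' ∧ ContinuousOn p₀ V ∧
          ∃ ρ : (Fin N → ℂ) → X × (Fin N → ℂ),
            ContinuousOn ρ V' ∧ Set.MapsTo ρ V' V ∧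
            (∀ z ∈ V', p₀ (ρ z) = z) ∧ (∀ yw ∈ V, ρ (p₀ yw) = yw)) :=
  riemann_domain_over_retraction_general N M S hS σ hσc hσM p hpc hp
end

section
/- Let f be holomorphic on Y₀ = {z ∈ ℂ^{n+1} : Σ z_j² = 0} \ {0} (n ≥ 2). Define, for w ∈ ℂⁿ with w₁² + ⋯ + wₙ² ≠ 0, B(w) = −(f(w, r(w)) + f(w, −r(w))) and C(w) = f(w, r(w))·f(w, −r(w)), where r(w) is either square root of −(w₁² + ⋯ + wₙ²). Then B and C are well-defined (independent of the choice of square root) and holomorphic on {w ∈ ℂⁿ : w₁² + ⋯ + wₙ² ≠ 0}. -/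
/-!
`B` and `C` are symmetric in `f(w, r)` and `f(w, -r)`, and the two square roots of `-S(w)`,
`S(w) = w₁² + ⋯ + wₙ²`, differ by a sign, so they do not depend on the root. Near a point `w₀`
with `S(w₀) ≠ 0` a root can be chosen holomorphically, `ρ(w) = r₀ · (S(w)/S(w₀))^{1/2}` with the
principal branch; then `w ↦ (w, ±ρ(w))` are holomorphic maps into the cone, and composing them
with the local holomorphic extensions of `f` shows that `B` and `C` are holomorphic near `w₀`.
-/

/-- A function is holomorphic on a (not necessarily open) set `A ⊆ ℂ^m` if near every
point of `A` it extends to a holomorphic function on an ambient open neighborhood. -/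
def HolomorphicOnSubset {m : ℕ} (f : (Fin m → ℂ) → ℂ) (A : Set (Fin m → ℂ)) : Prop :=
  ∀ z ∈ A, ∃ U : Set (Fin m → ℂ), IsOpen U ∧ z ∈ U ∧
    ∃ F : (Fin m → ℂ) → ℂ, DifferentiableOn ℂ F U ∧ Set.EqOn f F (U ∩ A)

open Filter Topology

theorem symm_apply_neg_eq_of_sq_eq {R γ δ : Type*} [CommRing R] [NoZeroDivisors R]
    (φ : γ → γ → δ) (hφ : ∀ a b, φ a b = φ b a) (g : R → γ) {r r' : R}
    (h : r ^ 2 = r' ^ 2) : φ (g r) (g (-r)) = φ (g r') (g (-r')) := by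
  rcases sq_eq_sq_iff_eq_or_eq_neg.1 h with rfl | rfl
  · rfl
  · rw [neg_neg, hφ]

theorem DifferentiableAt.finSnoc {𝕜 E F : Type*} [NontriviallyNormedField 𝕜]
    [NormedAddCommGroup E] [NormedSpace 𝕜 E] [NormedAddCommGroup F] [NormedSpace 𝕜 F]
    {n : ℕ} {f : E → Fin n → F} {g : E → F} {x : E}
    (hf : DifferentiableAt 𝕜 f x) (hg : DifferentiableAt 𝕜 g x) :
    DifferentiableAt 𝕜 (fun a => (Fin.snoc (f a) (g a) : Fin (n + 1) → F)) x := by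
  refine differentiableAt_pi.2 fun i => ?_
  induction i using Fin.lastCases with
  | last => simpa using hg
  | cast j => simpa using differentiableAt_pi.1 hf j

theorem exists_differentiableAt_sq_eq {E : Type*} [NormedAddCommGroup E] [NormedSpace ℂ E]
    {h : E → ℂ} {x₀ : E} (hd : DifferentiableAt ℂ h x₀) (h0 : h x₀ ≠ 0) :
    ∃ ρ : E → ℂ, DifferentiableAt ℂ ρ x₀ ∧ ∀ x, ρ x ^ 2 = h x := by
  obtain ⟨r₀, hr₀⟩ := IsAlgClosed.exists_pow_nat_eq (h x₀) two_pos
  refine ⟨fun x => r₀ * (h x / h x₀) ^ (2⁻¹ : ℂ), ?_, fun x => ?_⟩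
  · have h1 : h x₀ / h x₀ ∈ Complex.slitPlane := by
      rw [div_self h0]
      exact Complex.one_mem_slitPlane
    fun_prop (disch := exact h1)
  · rw [mul_pow, Complex.cpow_ofNat_inv_pow, hr₀]
    field_simp

theorem HolomorphicOnSubset.exists_differentiableAt_eventuallyEq_comp {m : ℕ}
    {f : (Fin m → ℂ) → ℂ} {A : Set (Fin m → ℂ)} (hf : HolomorphicOnSubset f A)
    {E : Type*} [NormedAddCommGroup E] [NormedSpace ℂ E] {z : E → Fin m → ℂ} {x₀ : E}
    (hz : DifferentiableAt ℂ z x₀) (hzA : ∀ᶠ x in 𝓝 x₀, z x ∈ A) :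
    ∃ F : E → ℂ, DifferentiableAt ℂ F x₀ ∧ (fun x => f (z x)) =ᶠ[𝓝 x₀] F := by
  obtain ⟨U, hU, hzU, F, hF, hfF⟩ := hf (z x₀) hzA.self_of_nhds
  refine ⟨F ∘ z, (hF.differentiableAt (hU.mem_nhds hzU)).comp x₀ hz, ?_⟩
  filter_upwards [hzA, hz.continuousAt.preimage_mem_nhds (hU.mem_nhds hzU)] with x hxA hxU
  exact hfF ⟨hxU, hxA⟩

theorem snoc_mem_punctured_cone {n : ℕ} {w : Fin n → ℂ} {r : ℂ}
    (hw : (∑ j, w j ^ 2) ≠ 0) (hr : r ^ 2 = -(∑ j, w j ^ 2)) :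
    (Fin.snoc w r : Fin (n + 1) → ℂ) ∈
      {z : Fin (n + 1) → ℂ | (∑ j, z j ^ 2) = 0 ∧ z ≠ 0} := by
  refine ⟨by simp [Fin.sum_univ_castSucc, hr], fun h0 => hw ?_⟩
  have hr0 : r = 0 := by simpa using congrFun h0 (Fin.last n)
  simpa [hr0] using hr.symm

theorem differentiableOn_of_eq_apply_snoc_sqrt {n : ℕ} {f : (Fin (n + 1) → ℂ) → ℂ}
    (hf : HolomorphicOnSubset f {z : Fin (n + 1) → ℂ | (∑ j, z j ^ 2) = 0 ∧ z ≠ 0})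
    {φ : ℂ → ℂ → ℂ} (hφ : Differentiable ℂ fun p : ℂ × ℂ => φ p.1 p.2)
    {g : (Fin n → ℂ) → ℂ}
    (hg : ∀ w : Fin n → ℂ, (∑ j, w j ^ 2) ≠ 0 → ∀ r : ℂ, r ^ 2 = -(∑ j, w j ^ 2) →
      g w = φ (f (Fin.snoc w r)) (f (Fin.snoc w (-r)))) :
    DifferentiableOn ℂ g {w : Fin n → ℂ | (∑ j, w j ^ 2) ≠ 0} := by
  intro w₀ (hw₀ : (∑ j, w₀ j ^ 2) ≠ 0)
  have hS : Differentiable ℂ fun w : Fin n → ℂ => ∑ j, w j ^ 2 := by fun_prop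
  obtain ⟨ρ, hρ, hρ_sq⟩ := exists_differentiableAt_sq_eq (hS w₀).fun_neg (neg_ne_zero.2 hw₀)
  have hS_ne : ∀ᶠ w in 𝓝 w₀, (∑ j, w j ^ 2) ≠ 0 :=
    hS.continuous.continuousAt.eventually_ne hw₀
  obtain ⟨Fp, hFp, hfFp⟩ := hf.exists_differentiableAt_eventuallyEq_comp
    (differentiableAt_id.finSnoc hρ)
    (hS_ne.mono fun w hw => snoc_mem_punctured_cone hw (hρ_sq w))
  obtain ⟨Fm, hFm, hfFm⟩ := hf.exists_differentiableAt_eventuallyEq_comp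
    (differentiableAt_id.finSnoc hρ.fun_neg)
    (hS_ne.mono fun w hw => snoc_mem_punctured_cone hw ((neg_sq _).trans (hρ_sq w)))
  refine (hφ.differentiableAt.comp w₀ (hFp.prodMk hFm)).congr_of_eventuallyEq ?_
    |>.differentiableWithinAt
  filter_upwards [hS_ne, hfFp, hfFm] with w hw hwp hwm
  simp only [Function.comp_apply, hg w hw (ρ w) (hρ_sq w), hwp, hwm]

theorem symmetric_functions_welldefined_holomorphic_general (n : ℕ)
    (f : (Fin (n + 1) → ℂ) → ℂ)
    (hf : HolomorphicOnSubset f {z : Fin (n + 1) → ℂ | (∑ j, z j ^ 2) = 0 ∧ z ≠ 0}) :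
    (∀ w : Fin n → ℂ, (∑ j, w j ^ 2) ≠ 0 →
      ∀ r r' : ℂ, r ^ 2 = -(∑ j, w j ^ 2) → r' ^ 2 = -(∑ j, w j ^ 2) →
        (-(f (Fin.snoc w r) + f (Fin.snoc w (-r)))
          = -(f (Fin.snoc w r') + f (Fin.snoc w (-r'))) ∧
         f (Fin.snoc w r) * f (Fin.snoc w (-r))
          = f (Fin.snoc w r') * f (Fin.snoc w (-r')))) ∧
    (∃ B C : (Fin n → ℂ) → ℂ,
      DifferentiableOn ℂ B {w : Fin n → ℂ | (∑ j, w j ^ 2) ≠ 0} ∧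
      DifferentiableOn ℂ C {w : Fin n → ℂ | (∑ j, w j ^ 2) ≠ 0} ∧
      ∀ w : Fin n → ℂ, (∑ j, w j ^ 2) ≠ 0 →
        ∀ r : ℂ, r ^ 2 = -(∑ j, w j ^ 2) →
          B w = -(f (Fin.snoc w r) + f (Fin.snoc w (-r))) ∧
          C w = f (Fin.snoc w r) * f (Fin.snoc w (-r))) := by
  let s : (Fin n → ℂ) → ℂ := fun w => (-(∑ j, w j ^ 2)) ^ (2⁻¹ : ℂ)
  have hs (w : Fin n → ℂ) : s w ^ 2 = -(∑ j, w j ^ 2) := Complex.cpow_ofNat_inv_pow _ 2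
  have hB (w : Fin n → ℂ) {r r' : ℂ} (h : r ^ 2 = r' ^ 2) :=
    symm_apply_neg_eq_of_sq_eq (fun a b => -(a + b)) (fun a b => by rw [add_comm])
      (fun t => f (Fin.snoc w t)) h
  have hC (w : Fin n → ℂ) {r r' : ℂ} (h : r ^ 2 = r' ^ 2) :=
    symm_apply_neg_eq_of_sq_eq (· * ·) mul_comm (fun t => f (Fin.snoc w t)) h
  refine ⟨fun w _ r r' hr hr' => ⟨hB w (hr.trans hr'.symm), hC w (hr.trans hr'.symm)⟩,
    _, _, differentiableOn_of_eq_apply_snoc_sqrt (φ := fun a b => -(a + b)) hf (by fun_prop)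
      fun w _ r hr => hB w ((hs w).trans hr.symm),
    differentiableOn_of_eq_apply_snoc_sqrt (φ := (· * ·)) hf (by fun_prop)
      fun w _ r hr => hC w ((hs w).trans hr.symm),
    fun w _ r hr => ⟨hB w ((hs w).trans hr.symm), hC w ((hs w).trans hr.symm)⟩⟩

/-- For f holomorphic on the punctured quadric cone Y₀ (n ≥ 2), the symmetric
functions B(w) = −(f(w,r) + f(w,−r)) and C(w) = f(w,r)·f(w,−r), where r² = −Σw_j²,
are independent of the choice of the square root r and holomorphic on
{w ∈ ℂⁿ : Σ w_j² ≠ 0}. -/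
theorem symmetric_functions_welldefined_holomorphic (n : ℕ) (hn : 2 ≤ n)
    (f : (Fin (n + 1) → ℂ) → ℂ)
    (hf : HolomorphicOnSubset f {z : Fin (n + 1) → ℂ | (∑ j, z j ^ 2) = 0 ∧ z ≠ 0}) :
    (∀ w : Fin n → ℂ, (∑ j, w j ^ 2) ≠ 0 →
      ∀ r r' : ℂ, r ^ 2 = -(∑ j, w j ^ 2) → r' ^ 2 = -(∑ j, w j ^ 2) →
        (-(f (Fin.snoc w r) + f (Fin.snoc w (-r)))
          = -(f (Fin.snoc w r') + f (Fin.snoc w (-r'))) ∧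
         f (Fin.snoc w r) * f (Fin.snoc w (-r))
          = f (Fin.snoc w r') * f (Fin.snoc w (-r')))) ∧
    (∃ B C : (Fin n → ℂ) → ℂ,
      DifferentiableOn ℂ B {w : Fin n → ℂ | (∑ j, w j ^ 2) ≠ 0} ∧
      DifferentiableOn ℂ C {w : Fin n → ℂ | (∑ j, w j ^ 2) ≠ 0} ∧
      ∀ w : Fin n → ℂ, (∑ j, w j ^ 2) ≠ 0 →
        ∀ r : ℂ, r ^ 2 = -(∑ j, w j ^ 2) →
          B w = -(f (Fin.snoc w r) + f (Fin.snoc w (-r))) ∧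
          C w = f (Fin.snoc w r) * f (Fin.snoc w (-r))) :=
  symmetric_functions_welldefined_holomorphic_general n f hf
end
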